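/- Consider the Matoušek USO m₂ of the 3-cube whose dimension influence graph has non-loop edges (1,3) and (2,3) only (two incomparable parents of one vertex). Then m₂ does not admit three vertex-disjoint directed paths from its unique source to its unique sink. -/

import Mathlib

open scoped symmDiff

/-- An orientation of the `3`-cube. -/
def IsOrientation (o : Finset (Fin 3) → Finset (Fin 3)) : Prop :=
  ∀ (v : Finset (Fin 3)) (d : Fin 3), d ∈ o v ↔ d ∉ o (v ∆ {d})

/-- A directed step along an outgoing edge of the cube orientation `o`. -/
def Step (o : Finset (Fin 3) → Finset (Fin 3)) (v w : Finset (Fin 3)) : Prop :=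
  ∃ d, d ∈ o v ∧ w = v ∆ {d}

/-- `s :: p` is a directed path from `s` to `t` in the orientation `o`. -/
def IsPathFrom (o : Finset (Fin 3) → Finset (Fin 3)) (s t : Finset (Fin 3))
    (p : List (Finset (Fin 3))) : Prop :=
  List.Chain (Step o) s p ∧ (s :: p).getLast (List.cons_ne_nil s p) = t

/-- Existence of three directed paths from `s` to `t`, pairwise vertex-disjoint
except at `s` and `t`. -/
def ThreeDisjointPaths (o : Finset (Fin 3) → Finset (Fin 3))
    (s t : Finset (Fin 3)) : Prop :=
  ∃ p₁ p₂ p₃ : List (Finset (Fin 3)),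
    IsPathFrom o s t p₁ ∧ IsPathFrom o s t p₂ ∧ IsPathFrom o s t p₃ ∧
    (∀ x, x ∈ s :: p₁ → x ∈ s :: p₂ → x = s ∨ x = t) ∧
    (∀ x, x ∈ s :: p₁ → x ∈ s :: p₃ → x = s ∨ x = t) ∧
    (∀ x, x ∈ s :: p₂ → x ∈ s :: p₃ → x = s ∨ x = t)

/-- The dimension influence graph with non-loop edges (1,3) and (2,3) only
(dimensions 1,2,3 are represented by 0,1,2 : Fin 3). -/
def E₂ (d d' : Fin 3) : Prop :=
  d = d' ∨ (d = 0 ∧ d' = 2) ∨ (d = 1 ∧ d' = 2)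

/-! Both conditions on `m` are satisfied by the explicit outmap in which coordinate `j` is
outgoing at `v` iff `v` contains an odd number of in-neighbours of `j`; since they fix `m ∅` and
how `m` changes along every edge, they force `m` to be this outmap. Its source is the full set
and its sink `∅`. A path can leave the vertex set `{univ, {1,2}, {0,2}}` only
through `{0,1}` or `{2}`, so these two inner vertices separate the source from the sink, and three
internally disjoint paths cannot all pass through them. -/

open Finset

section Flip

variable {α β : Type*} [DecidableEq α] [DecidableEq β]

lemma symmDiff_singleton_of_mem {v : Finset α} {d : α} (h : d ∈ v) : v ∆ {d} = v.erase d := by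
  ext x
  by_cases hx : x = d <;> simp [mem_symmDiff, hx, h]

lemma symmDiff_singleton_of_notMem {v : Finset α} {d : α} (h : d ∉ v) :
    v ∆ {d} = insert d v := by
  ext x
  by_cases hx : x = d <;> simp [mem_symmDiff, hx, h]

theorem outmap_eq_of_symmDiff_singleton {m m' : Finset α → Finset β} (N : α → Finset β)
    (hm : ∀ v d, m (v ∆ {d}) = m v ∆ N d) (hm' : ∀ v d, m' (v ∆ {d}) = m' v ∆ N d)
    (h0 : m ∅ = m' ∅) : m = m' := by
  funext v
  induction v using Finset.induction_on with
  | empty => exact h0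
  | insert d v hd ih => rw [← symmDiff_singleton_of_notMem hd, hm, hm', ih]

end Flip

section Matousek

variable {α : Type*} [Fintype α] [DecidableEq α] (G : α → α → Prop) [DecidableRel G]

def matousekOutmap (v : Finset α) : Finset α := {j | Odd #{i ∈ v | G i j}}

lemma matousekOutmap_symmDiff_singleton (v : Finset α) (d : α) :
    matousekOutmap G (v ∆ {d}) = matousekOutmap G v ∆ ({j | G d j} : Finset α) := by
  ext j
  simp only [matousekOutmap, mem_symmDiff, mem_filter, mem_univ, true_and]
  by_cases hd : d ∈ v
  · rw [symmDiff_singleton_of_mem hd, filter_erase]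
    by_cases hdj : G d j
    · rw [← card_erase_add_one (mem_filter.2 ⟨hd, hdj⟩), Nat.odd_add_one]
      tauto
    · rw [erase_eq_of_notMem (by simp [hdj])]
      tauto
  · rw [symmDiff_singleton_of_notMem hd, filter_insert]
    by_cases hdj : G d j
    · rw [if_pos hdj, card_insert_of_notMem (by simp [hd]), Nat.odd_add_one]
      tauto
    · rw [if_neg hdj]
      tauto

theorem eq_matousekOutmap {m : Finset α → Finset α}
    (hflip : ∀ d d' v, Xor (d' ∈ m v) (d' ∈ m (v ∆ {d})) ↔ G d d') (h0 : m ∅ = ∅) :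
    m = matousekOutmap G := by
  refine outmap_eq_of_symmDiff_singleton (fun d => ({j | G d j} : Finset α)) (fun v d => ?_)
    (matousekOutmap_symmDiff_singleton G) (by simp [h0, matousekOutmap])
  ext j
  simp only [mem_symmDiff, mem_filter, mem_univ, true_and, ← hflip d j v, Xor]
  tauto

end Matousek

theorem List.IsChain.exists_rel_mem_notMem {α : Type*} {R : α → α → Prop} {C : Set α} :
    ∀ {a : α} {l : List α}, IsChain R (a :: l) → a ∈ C →
      (a :: l).getLast (cons_ne_nil a l) ∉ C → ∃ x ∈ C, ∃ y ∈ l, y ∉ C ∧ R x y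
  | _, [], _, ha, hl => absurd ha hl
  | a, b :: l, h, ha, hl => by
    rw [isChain_cons_cons] at h
    by_cases hb : b ∈ C
    · obtain ⟨x, hx, y, hy, hyC, hxy⟩ := h.2.exists_rel_mem_notMem hb (by simpa using hl)
      exact ⟨x, hx, y, mem_cons_of_mem b hy, hyC, hxy⟩
    · exact ⟨a, ha, b, mem_cons_self, hb, h.1⟩

theorem not_threeDisjointPaths_of_cut {o : Finset (Fin 3) → Finset (Fin 3)}
    {s t a b : Finset (Fin 3)} (hcut : ∀ p, IsPathFrom o s t p → a ∈ p ∨ b ∈ p)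
    (ha : ¬(a = s ∨ a = t)) (hb : ¬(b = s ∨ b = t)) : ¬ThreeDisjointPaths o s t := by
  rintro ⟨p₁, p₂, p₃, h₁, h₂, h₃, d₁₂, d₁₃, d₂₃⟩
  rcases hcut _ h₁ with h₁ | h₁ <;> rcases hcut _ h₂ with h₂ | h₂ <;>
    rcases hcut _ h₃ with h₃ | h₃ <;>
    first
      | exact ha (d₁₂ a (List.mem_cons_of_mem s h₁) (List.mem_cons_of_mem s h₂))
      | exact hb (d₁₂ b (List.mem_cons_of_mem s h₁) (List.mem_cons_of_mem s h₂))
      | exact ha (d₁₃ a (List.mem_cons_of_mem s h₁) (List.mem_cons_of_mem s h₃))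
      | exact hb (d₁₃ b (List.mem_cons_of_mem s h₁) (List.mem_cons_of_mem s h₃))
      | exact ha (d₂₃ a (List.mem_cons_of_mem s h₂) (List.mem_cons_of_mem s h₃))
      | exact hb (d₂₃ b (List.mem_cons_of_mem s h₂) (List.mem_cons_of_mem s h₃))

instance : DecidableRel E₂ := fun d d' => by unfold E₂; infer_instance

lemma matousekOutmap_E₂_eq_univ_iff (v : Finset (Fin 3)) :
    matousekOutmap E₂ v = univ ↔ v = univ := by
  revert v; decide

lemma matousekOutmap_E₂_eq_empty_iff (v : Finset (Fin 3)) :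
    matousekOutmap E₂ v = ∅ ↔ v = ∅ := by
  revert v; decide

lemma mem_of_isPathFrom_matousekOutmap_E₂ {p : List (Finset (Fin 3))}
    (hp : IsPathFrom (matousekOutmap E₂) univ ∅ p) : {0, 1} ∈ p ∨ {2} ∈ p := by
  let C : Finset (Finset (Fin 3)) := {univ, {1, 2}, {0, 2}}
  have hexit : ∀ x ∈ C, ∀ d ∈ matousekOutmap E₂ x, x ∆ {d} ∉ C →
      x ∆ {d} = {0, 1} ∨ x ∆ {d} = {2} := by decide
  obtain ⟨x, hx, y, hy, hyC, d, hd, rfl⟩ :=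
    List.IsChain.exists_rel_mem_notMem (C := (C : Set (Finset (Fin 3)))) hp.1 (by decide)
      (by rw [hp.2]; decide)
  rcases hexit x hx d hd hyC with h | h <;> rw [h] at hy <;> simp [hy]

theorem stmt11_general (m : Finset (Fin 3) → Finset (Fin 3))
    (h0 : m ∅ = ∅)
    (hmat : ∀ (d d' : Fin 3) (v : Finset (Fin 3)),
      (Xor' (d' ∈ m v) (d' ∈ m (v ∆ {d})) ↔ E₂ d d')) :
    ∀ s t : Finset (Fin 3), m s = Finset.univ → m t = ∅ →
      ¬ ThreeDisjointPaths m s t := by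
  intro s t hs ht
  obtain rfl := eq_matousekOutmap E₂ hmat h0
  obtain rfl := (matousekOutmap_E₂_eq_univ_iff s).1 hs
  obtain rfl := (matousekOutmap_E₂_eq_empty_iff t).1 ht
  exact not_threeDisjointPaths_of_cut (fun _ => mem_of_isPathFrom_matousekOutmap_E₂) (by decide)
    (by decide)

/-- The Matoušek USO `m₂` of the 3-cube whose dimension influence graph has two
incomparable in-neighbours of one vertex admits no three vertex-disjoint directed
paths from its unique source to its unique sink. -/
theorem stmt11 (m : Finset (Fin 3) → Finset (Fin 3))
    (hor : IsOrientation m) (h0 : m ∅ = ∅)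
    (hmat : ∀ (d d' : Fin 3) (v : Finset (Fin 3)),
      (Xor' (d' ∈ m v) (d' ∈ m (v ∆ {d})) ↔ E₂ d d')) :
    ∀ s t : Finset (Fin 3), m s = Finset.univ → m t = ∅ →
      ¬ ThreeDisjointPaths m s t :=
  stmt11_general m h0 hmat
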